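/- Assume: Ψ, ∂Ψ/∂r, Y, Q, Q' satisfy, as (r,R)→(0,0) and r→0⁺ respectively, Ψ(r,R) = ψ₃₀r³ + ψ₂₁r²R + ψ₁₂rR² + ψ₀₃R³ + o((|r|+|R|)³), ∂Ψ/∂r(r,R) = 3ψ₃₀r² + 2ψ₂₁rR + ψ₁₂R² + o((|r|+|R|)²), Y(r,R) = 1 + y₂₀r² + y₁₁rR + y₀₂R² + o((|r|+|R|)²), Q(r) = q₀r³ + o(r³), Q'(r) = 3q₀r² + o(r²), with 0 < |q₀| < ψ₃₀. Define Ψ₁ := Ψ − Q²/(2R), Y₁ := (1 − QQ'/(R·∂Ψ/∂r))·Y, u₁² := 2Ψ₁/R − 1 + Y₁². Let 0 < c₁ ≤ c₂ and let R_u : (0,ε) → ℝ satisfy c₁r³ ≤ R_u(r) ≤ c₂r³ and u₁²(r,R_u(r)) = 0 for all r ∈ (0,ε). Then lim_{r→0⁺} R_u(r)/r³ = q₀²/(2ψ₃₀). -/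

import Mathlib

open Filter Topology Asymptotics

/-! Along the curve put `t = R_u(r)/r³`. Multiplying `u₁² = 0` by `R²` and dividing by `r⁶` turns it
into `a t + b + c t² = 0`, where `a`, `b`, `c` are built from `Ψ/r³`, `(∂Ψ/∂r)/r²`, `Y`, `Q/r³`,
`Q'/r²`. Since `R_u = O(r³)`, the weight `|r| + |R_u|` is comparable to `r`, so these quotients tend
to `ψ₃₀`, `3ψ₃₀`, `1`, `q₀`, `3q₀`. Hence `c = Y² − 1 → 0` while `t` stays bounded, and
`a → 2(ψ₃₀² − q₀²)/ψ₃₀`, which is nonzero because `ψ₃₀ > |q₀|`; so `t` tends to the root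
`q₀²/(2ψ₃₀)` of the limiting linear equation. -/

/-- The charged velocity function
`u₁²(r,R) = 2Ψ₁/R − 1 + Y₁²`, with `Ψ₁ = Ψ − Q²/(2R)` and
`Y₁ = (1 − QQ'/(R·∂Ψ/∂r))·Y`. -/
noncomputable def u1sq (Ψ Ψr Y : ℝ → ℝ → ℝ) (Q Q' : ℝ → ℝ) (r R : ℝ) : ℝ :=
  2 * (Ψ r R - Q r ^ 2 / (2 * R)) / R - 1
    + ((1 - Q r * Q' r / (R * Ψr r R)) * Y r R) ^ 2

theorem Asymptotics.IsLittleO.tendsto_div_of_sub {α 𝕜 : Type*} [NormedField 𝕜] {l : Filter α}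
    {f g : α → 𝕜} {c : 𝕜} (h : (fun x => f x - c * g x) =o[l] g) (hg : ∀ᶠ x in l, g x ≠ 0) :
    Tendsto (fun x => f x / g x) l (𝓝 c) := by
  have h' := h.tendsto_div_nhds_zero.add_const c
  rw [zero_add] at h'
  refine h'.congr' ?_
  filter_upwards [hg] with x hx
  field_simp
  ring

theorem tendsto_of_eventually_quadratic_eq_zero {α 𝕜 : Type*} [NormedField 𝕜] {l : Filter α}
    {t a b c : α → 𝕜} {a₀ b₀ : 𝕜} (ha : Tendsto a l (𝓝 a₀)) (ha₀ : a₀ ≠ 0)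
    (hb : Tendsto b l (𝓝 b₀)) (hc : Tendsto c l (𝓝 0))
    (ht : IsBoundedUnder (· ≤ ·) l fun x => ‖t x‖)
    (heq : ∀ᶠ x in l, a x * t x + b x + c x * t x ^ 2 = 0) :
    Tendsto t l (𝓝 (-b₀ / a₀)) := by
  have hct : Tendsto (fun x => c x * t x ^ 2) l (𝓝 0) := by
    simpa using (isLittleO_one_iff 𝕜).2 hc |>.mul_isBigO (((isBigO_one_iff 𝕜).2 ht).pow 2)
  refine (((hb.add hct).neg.div ha ha₀).congr' ?_).trans_eq (by simp)
  filter_upwards [heq, ha.eventually_ne ha₀] with x hx hax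
  rw [Pi.div_apply, div_eq_iff hax]
  linear_combination -hx

theorem tendsto_of_eventually_normalized_quadratic_eq_zero {α : Type*} {l : Filter α}
    {A B C D E t : α → ℝ} {ψ q : ℝ} (hlt : |q| < ψ) (hA : Tendsto A l (𝓝 ψ))
    (hB : Tendsto B l (𝓝 (3 * ψ))) (hC : Tendsto C l (𝓝 1)) (hD : Tendsto D l (𝓝 q))
    (hE : Tendsto E l (𝓝 (3 * q))) (ht : IsBoundedUnder (· ≤ ·) l fun x => ‖t x‖)
    (heq : ∀ᶠ x in l, (2 * A x - 2 * C x ^ 2 * D x * E x / B x) * t x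
      + (C x ^ 2 * D x ^ 2 * E x ^ 2 / B x ^ 2 - D x ^ 2) + (C x ^ 2 - 1) * t x ^ 2 = 0) :
    Tendsto t l (𝓝 (q ^ 2 / (2 * ψ))) := by
  have hψ : 0 < ψ := (abs_nonneg q).trans_lt hlt
  have hgap : ψ ^ 2 - q ^ 2 ≠ 0 := by
    have := pow_lt_pow_left₀ hlt (abs_nonneg q) two_ne_zero
    rw [sq_abs] at this
    exact (sub_pos.2 this).ne'
  have ha := (hA.const_mul 2).sub
    ((((hC.pow 2).const_mul 2).mul hD).mul hE |>.div hB (by positivity))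
  have hb := (((hC.pow 2).mul (hD.pow 2)).mul (hE.pow 2)).div (hB.pow 2) (by positivity)
    |>.sub (hD.pow 2)
  have hc : Tendsto (fun x => C x ^ 2 - 1) l (𝓝 0) := by simpa using (hC.pow 2).sub_const 1
  convert tendsto_of_eventually_quadratic_eq_zero ha ?_ hb hc ht heq using 2
  · field_simp
    ring
  · field_simp
    exact div_ne_zero (mul_ne_zero two_ne_zero hgap) hψ.ne'

theorem tendsto_of_sub_isLittleO_abs_add_abs_pow {f p : ℝ × ℝ → ℝ} {n : ℕ} (hn : n ≠ 0)
    (hf : (fun q => f q - p q) =o[𝓝 (0, 0)] fun q => (|q.1| + |q.2|) ^ n)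
    (hp : ContinuousAt p (0, 0)) :
    Tendsto f (𝓝 (0, 0)) (𝓝 (p (0, 0))) := by
  have hw : Tendsto (fun q : ℝ × ℝ => (|q.1| + |q.2|) ^ n) (𝓝 (0, 0)) (𝓝 0) :=
    ((continuous_fst.abs.add continuous_snd.abs).pow n).tendsto' _ _ (by simp [hn])
  simpa using (hf.trans_tendsto hw).add hp

section Curve

variable {R : ℝ → ℝ}

theorem tendsto_prodMk_of_isLittleO_id (hR : R =o[𝓝[>] 0] fun r => r) :
    Tendsto (fun r => (r, R r)) (𝓝[>] 0) (𝓝 ((0 : ℝ), (0 : ℝ))) := by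
  have h0 : Tendsto (fun r : ℝ => r) (𝓝[>] 0) (𝓝 0) := tendsto_nhdsWithin_of_tendsto_nhds tendsto_id
  exact h0.prodMk_nhds (hR.trans_tendsto h0)

theorem abs_add_abs_pow_isBigO_of_isLittleO_id (hR : R =o[𝓝[>] 0] fun r => r) (n : ℕ) :
    (fun r => (|r| + |R r|) ^ n) =O[𝓝[>] 0] fun r => r ^ n :=
  ((isBigO_refl (fun r : ℝ => r) _).abs_left.add hR.isBigO.abs_left).pow n

theorem tendsto_div_pow_of_sub_isLittleO {f p : ℝ × ℝ → ℝ} {n : ℕ} {L : ℝ}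
    (hf : (fun q => f q - p q) =o[𝓝 (0, 0)] fun q => (|q.1| + |q.2|) ^ n)
    (hR : R =o[𝓝[>] 0] fun r => r)
    (hp : Tendsto (fun r => p (r, R r) / r ^ n) (𝓝[>] 0) (𝓝 L)) :
    Tendsto (fun r => f (r, R r) / r ^ n) (𝓝[>] 0) (𝓝 L) := by
  have hlo := ((hf.comp_tendsto (tendsto_prodMk_of_isLittleO_id hR)).trans_isBigO
    (abs_add_abs_pow_isBigO_of_isLittleO_id hR n)).tendsto_div_nhds_zero
  simpa [sub_div] using hlo.add hp

theorem tendsto_cubic_div_pow_three (hR : R =o[𝓝[>] 0] fun r => r) (a b c d : ℝ) :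
    Tendsto (fun r => (a * r ^ 3 + b * r ^ 2 * R r + c * r * R r ^ 2 + d * R r ^ 3) / r ^ 3)
      (𝓝[>] 0) (𝓝 a) := by
  have hτ := ((by fun_prop : Continuous fun τ : ℝ => a + b * τ + c * τ ^ 2 + d * τ ^ 3).tendsto
    0).comp hR.tendsto_div_nhds_zero
  refine (hτ.congr' ?_).trans_eq (by simp)
  filter_upwards [self_mem_nhdsWithin] with r (hr : 0 < r)
  simp only [Function.comp_apply]
  field_simp

theorem tendsto_quadratic_div_sq (hR : R =o[𝓝[>] 0] fun r => r) (a b c : ℝ) :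
    Tendsto (fun r => (a * r ^ 2 + b * r * R r + c * R r ^ 2) / r ^ 2) (𝓝[>] 0) (𝓝 a) := by
  have hτ := ((by fun_prop : Continuous fun τ : ℝ => a + b * τ + c * τ ^ 2).tendsto
    0).comp hR.tendsto_div_nhds_zero
  refine (hτ.congr' ?_).trans_eq (by simp)
  filter_upwards [self_mem_nhdsWithin] with r (hr : 0 < r)
  simp only [Function.comp_apply]
  field_simp

end Curve

theorem quadratic_eq_zero_of_u1sq_eq_zero {P Pr y q q' r R : ℝ} (hr : r ≠ 0) (hR : R ≠ 0)
    (hPr : Pr ≠ 0)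
    (h : 2 * (P - q ^ 2 / (2 * R)) / R - 1 + ((1 - q * q' / (R * Pr)) * y) ^ 2 = 0) :
    (2 * (P / r ^ 3) - 2 * y ^ 2 * (q / r ^ 3) * (q' / r ^ 2) / (Pr / r ^ 2)) * (R / r ^ 3)
      + (y ^ 2 * (q / r ^ 3) ^ 2 * (q' / r ^ 2) ^ 2 / (Pr / r ^ 2) ^ 2 - (q / r ^ 3) ^ 2)
      + (y ^ 2 - 1) * (R / r ^ 3) ^ 2 = 0 := by
  field_simp at h ⊢
  linear_combination h

theorem vanishing_curve_asymptotics_p_one_general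
    (Ψ Ψr Y : ℝ → ℝ → ℝ) (Q Q' : ℝ → ℝ)
    (ψ30 ψ21 ψ12 ψ03 y20 y11 y02 q0 : ℝ)
    (hlt : |q0| < ψ30)
    (hΨ : (fun q : ℝ × ℝ =>
        Ψ q.1 q.2 - (ψ30*q.1^3 + ψ21*q.1^2*q.2 + ψ12*q.1*q.2^2 + ψ03*q.2^3))
      =o[nhds ((0:ℝ), (0:ℝ))] fun q : ℝ × ℝ => (|q.1| + |q.2|)^3)
    (hΨr : (fun q : ℝ × ℝ =>
        Ψr q.1 q.2 - (3*ψ30*q.1^2 + 2*ψ21*q.1*q.2 + ψ12*q.2^2))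
      =o[nhds ((0:ℝ), (0:ℝ))] fun q : ℝ × ℝ => (|q.1| + |q.2|)^2)
    (hY : (fun q : ℝ × ℝ =>
        Y q.1 q.2 - (1 + y20*q.1^2 + y11*q.1*q.2 + y02*q.2^2))
      =o[nhds ((0:ℝ), (0:ℝ))] fun q : ℝ × ℝ => (|q.1| + |q.2|)^2)
    (hQ : (fun r : ℝ => Q r - q0 * r^3) =o[𝓝[>] (0:ℝ)] fun r : ℝ => r^3)
    (hQ' : (fun r : ℝ => Q' r - 3 * q0 * r^2) =o[𝓝[>] (0:ℝ)] fun r : ℝ => r^2)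
    (c₁ c₂ ε : ℝ) (hc₁ : 0 < c₁) (hε : 0 < ε)
    (Ru : ℝ → ℝ)
    (hRu : ∀ r ∈ Set.Ioo (0:ℝ) ε,
      c₁ * r^3 ≤ Ru r ∧ Ru r ≤ c₂ * r^3 ∧ u1sq Ψ Ψr Y Q Q' r (Ru r) = 0) :
    Tendsto (fun r : ℝ => Ru r / r^3) (𝓝[>] (0:ℝ)) (𝓝 (q0^2 / (2*ψ30))) := by
  have hcurve : ∀ᶠ r in 𝓝[>] 0,
      0 < r ∧ 0 < Ru r ∧ Ru r ≤ c₂ * r ^ 3 ∧ u1sq Ψ Ψr Y Q Q' r (Ru r) = 0 := by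
    filter_upwards [Ioo_mem_nhdsGT hε] with r hr
    obtain ⟨hlow, hhigh, hzero⟩ := hRu r hr
    exact ⟨hr.1, (mul_pos hc₁ (pow_pos hr.1 3)).trans_le hlow, hhigh, hzero⟩
  have hRu3 : Ru =O[𝓝[>] 0] fun r => r ^ 3 :=
    IsBigO.of_bound c₂ <| hcurve.mono fun r ⟨hr, hR, hle, _⟩ => by
      rwa [Real.norm_of_nonneg hR.le, Real.norm_of_nonneg (by positivity)]
  have hRu_o : Ru =o[𝓝[>] 0] fun r => r :=
    hRu3.trans_isLittleO ((isLittleO_pow_id (by norm_num)).mono nhdsWithin_le_nhds)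
  have hA : Tendsto (fun r => Ψ r (Ru r) / r ^ 3) (𝓝[>] 0) (𝓝 ψ30) :=
    tendsto_div_pow_of_sub_isLittleO hΨ hRu_o (tendsto_cubic_div_pow_three hRu_o _ _ _ _)
  have hB : Tendsto (fun r => Ψr r (Ru r) / r ^ 2) (𝓝[>] 0) (𝓝 (3 * ψ30)) :=
    tendsto_div_pow_of_sub_isLittleO hΨr hRu_o (tendsto_quadratic_div_sq hRu_o _ _ _)
  have hC : Tendsto (fun r => Y r (Ru r)) (𝓝[>] 0) (𝓝 1) := by
    simpa [Function.comp_def] using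
      (tendsto_of_sub_isLittleO_abs_add_abs_pow two_ne_zero hY (by fun_prop)).comp
        (tendsto_prodMk_of_isLittleO_id hRu_o)
  have hD : Tendsto (fun r => Q r / r ^ 3) (𝓝[>] 0) (𝓝 q0) :=
    hQ.tendsto_div_of_sub (hcurve.mono fun r h => pow_ne_zero 3 h.1.ne')
  have hE : Tendsto (fun r => Q' r / r ^ 2) (𝓝[>] 0) (𝓝 (3 * q0)) :=
    hQ'.tendsto_div_of_sub (hcurve.mono fun r h => pow_ne_zero 2 h.1.ne')
  have hΨr0 : ∀ᶠ r in 𝓝[>] 0, Ψr r (Ru r) ≠ 0 :=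
    (hB.eventually_ne (mul_pos three_pos ((abs_nonneg q0).trans_lt hlt)).ne').mono
      fun r h => (div_ne_zero_iff.1 h).1
  exact tendsto_of_eventually_normalized_quadratic_eq_zero hlt hA hB hC hD hE
    (div_isBoundedUnder_of_isBigO hRu3) <| (hcurve.and hΨr0).mono
      fun r ⟨⟨hr, hR, _, hzero⟩, hΨr0⟩ => quadratic_eq_zero_of_u1sq_eq_zero hr.ne' hR.ne' hΨr0 hzero

/-- Equation (101): in the case `p = 1`, `ψ₃₀ > |q₀|`, any curve `R_u`
pinched between `c₁r³` and `c₂r³` on which `u₁²` vanishes satisfies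
`R_u(r) = (q₀²/(2ψ₃₀))·r³ + o(r³)`. -/
theorem vanishing_curve_asymptotics_p_one
    (Ψ Ψr Y : ℝ → ℝ → ℝ) (Q Q' : ℝ → ℝ)
    (ψ30 ψ21 ψ12 ψ03 y20 y11 y02 q0 : ℝ)
    (hq0 : 0 < |q0|) (hlt : |q0| < ψ30)
    (hlink : ∀ r R, HasDerivAt (fun s => Ψ s R) (Ψr r R) r)
    (hQd : ∀ r, HasDerivAt Q (Q' r) r)
    (hΨ : (fun q : ℝ × ℝ =>
        Ψ q.1 q.2 - (ψ30*q.1^3 + ψ21*q.1^2*q.2 + ψ12*q.1*q.2^2 + ψ03*q.2^3))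
      =o[nhds ((0:ℝ), (0:ℝ))] fun q : ℝ × ℝ => (|q.1| + |q.2|)^3)
    (hΨr : (fun q : ℝ × ℝ =>
        Ψr q.1 q.2 - (3*ψ30*q.1^2 + 2*ψ21*q.1*q.2 + ψ12*q.2^2))
      =o[nhds ((0:ℝ), (0:ℝ))] fun q : ℝ × ℝ => (|q.1| + |q.2|)^2)
    (hY : (fun q : ℝ × ℝ =>
        Y q.1 q.2 - (1 + y20*q.1^2 + y11*q.1*q.2 + y02*q.2^2))
      =o[nhds ((0:ℝ), (0:ℝ))] fun q : ℝ × ℝ => (|q.1| + |q.2|)^2)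
    (hQ : (fun r : ℝ => Q r - q0 * r^3) =o[𝓝[>] (0:ℝ)] fun r : ℝ => r^3)
    (hQ' : (fun r : ℝ => Q' r - 3 * q0 * r^2) =o[𝓝[>] (0:ℝ)] fun r : ℝ => r^2)
    (c₁ c₂ ε : ℝ) (hc₁ : 0 < c₁) (hc₁₂ : c₁ ≤ c₂) (hε : 0 < ε)
    (Ru : ℝ → ℝ)
    (hRu : ∀ r ∈ Set.Ioo (0:ℝ) ε,
      c₁ * r^3 ≤ Ru r ∧ Ru r ≤ c₂ * r^3 ∧ u1sq Ψ Ψr Y Q Q' r (Ru r) = 0) :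
    Tendsto (fun r : ℝ => Ru r / r^3) (𝓝[>] (0:ℝ)) (𝓝 (q0^2 / (2*ψ30))) :=
  vanishing_curve_asymptotics_p_one_general Ψ Ψr Y Q Q' ψ30 ψ21 ψ12 ψ03 y20 y11 y02 q0 hlt hΨ hΨr hY
    hQ hQ' c₁ c₂ ε hc₁ hε Ru hRu
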